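/- Fix l ∈ ℕ₀ and define for ρ ∈ (0,1): ψ_{0,l}(ρ) := ρ^{l+1} (1−ρ²)^{−1/2} (2/(1+√(1−ρ²)))^{3/2+l} and ψ_{1,l}(ρ) := ρ^{l+1} (1/((3+2l)√(1−ρ²))) [ (1/(1−√(1−ρ²)))^{3/2+l} − (1/(1+√(1−ρ²)))^{3/2+l} ]. Then both ψ_{0,l} and ψ_{1,l} solve the ordinary differential equation −(1−ρ²) u''(ρ) + (−2/ρ + 5ρ) u'(ρ) + (15/4 + (l+1)(l+2)/ρ²) u(ρ) = 0 on (0,1), and ψ_{0,l} and ψ_{1,l} are linearly independent. -/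

import Mathlib

/-!
Substituting `u = exp (∫ q)` turns the equation into the Riccati equation
`-(1 - ρ²)(q' + q²) + (-2/ρ + 5ρ) q + 15/4 + (l+1)(l+2)/ρ² = 0`, and
`q = -1/(2ρ) + ρ/(1 - ρ²) + k/(ρ√(1 - ρ²))` solves it exactly when `k² = (l + 3/2)²`
(note `(l+1)(l+2) = (l + 3/2)² - 1/4`). Integrating `q` gives
`φ_k(ρ) = ρ^(k-1/2) (1 - ρ²)^(-1/2) (1 + √(1 - ρ²))^(-k)`, and with `c = l + 3/2` we have
`ψ_{0,l} = 2^c φ_c` and `(3 + 2l) ψ_{1,l} = φ_{-c} - φ_c`, because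
`(1 - √(1 - ρ²))(1 + √(1 - ρ²)) = ρ²`. Linear independence holds because
`φ_c / φ_{-c} = (ρ / (1 + √(1 - ρ²)))^(2c)` is not constant.
-/

noncomputable section

/-- `ψ_{0,l}(ρ) = ρ^{l+1} (1−ρ²)^{−1/2} (2/(1+√(1−ρ²)))^{3/2+l}` -/
def psi0 (l : ℕ) (ρ : ℝ) : ℝ :=
  ρ ^ (l + 1) * (1 - ρ ^ 2) ^ (-(1 / 2) : ℝ) *
    (2 / (1 + Real.sqrt (1 - ρ ^ 2))) ^ ((3 : ℝ) / 2 + l)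

/-- `ψ_{1,l}(ρ) = ρ^{l+1} (1/((3+2l)√(1−ρ²))) [(1/(1−√(1−ρ²)))^{3/2+l} − (1/(1+√(1−ρ²)))^{3/2+l}]` -/
def psi1 (l : ℕ) (ρ : ℝ) : ℝ :=
  ρ ^ (l + 1) * (1 / ((3 + 2 * (l : ℝ)) * Real.sqrt (1 - ρ ^ 2))) *
    ((1 / (1 - Real.sqrt (1 - ρ ^ 2))) ^ ((3 : ℝ) / 2 + l) -
      (1 / (1 + Real.sqrt (1 - ρ ^ 2))) ^ ((3 : ℝ) / 2 + l))

open Real Set Filter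

def odeLhs (l : ℕ) (ρ u u' u'' : ℝ) : ℝ :=
  -(1 - ρ ^ 2) * u'' + (-2 / ρ + 5 * ρ) * u' + (15 / 4 + ((l : ℝ) + 1) * ((l : ℝ) + 2) / ρ ^ 2) * u

lemma odeLhs_linComb (l : ℕ) (ρ a b u u' u'' v v' v'' : ℝ) :
    odeLhs l ρ (a * u + b * v) (a * u' + b * v') (a * u'' + b * v'') =
      a * odeLhs l ρ u u' u'' + b * odeLhs l ρ v v' v'' := by
  unfold odeLhs; ring

lemma odeLhs_mul_of_logDeriv (l : ℕ) (ρ u q q' : ℝ) :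
    odeLhs l ρ u (q * u) ((q' + q ^ 2) * u) = odeLhs l ρ 1 q (q' + q ^ 2) * u := by
  unfold odeLhs; ring

lemma odeLhs_deriv_eq_zero_of_eqOn {l : ℕ} {u v v' v'' : ℝ → ℝ} {s : Set ℝ}
    (hs : IsOpen s) (huv : EqOn u v s) (hv : ∀ x ∈ s, HasDerivAt v (v' x) x)
    (hv' : ∀ x ∈ s, HasDerivAt v' (v'' x) x)
    (hode : ∀ x ∈ s, odeLhs l x (v x) (v' x) (v'' x) = 0)
    {ρ : ℝ} (hρ : ρ ∈ s) : odeLhs l ρ (u ρ) (deriv u ρ) (deriv (deriv u) ρ) = 0 := by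
  have hu' : EqOn (deriv u) v' s := fun x hx =>
    ((hv x hx).congr_of_eventuallyEq (eventually_of_mem (hs.mem_nhds hx) huv)).deriv
  rw [huv hρ, hu' hρ,
    ((hv' ρ hρ).congr_of_eventuallyEq (eventually_of_mem (hs.mem_nhds hρ) hu')).deriv]
  exact hode ρ hρ

section UnitInterval

variable {ρ : ℝ}

lemma one_sub_sq_pos_of_mem_Ioo (hρ : ρ ∈ Ioo (0 : ℝ) 1) : 0 < 1 - ρ ^ 2 := by
  nlinarith [hρ.1, hρ.2]

lemma sqrt_one_sub_sq_pos (hρ : ρ ∈ Ioo (0 : ℝ) 1) : 0 < √(1 - ρ ^ 2) :=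
  sqrt_pos.2 (one_sub_sq_pos_of_mem_Ioo hρ)

lemma sq_sqrt_one_sub_sq (hρ : ρ ∈ Ioo (0 : ℝ) 1) : √(1 - ρ ^ 2) ^ 2 = 1 - ρ ^ 2 :=
  sq_sqrt (one_sub_sq_pos_of_mem_Ioo hρ).le

lemma sqrt_one_sub_sq_lt_one (hρ : ρ ∈ Ioo (0 : ℝ) 1) : √(1 - ρ ^ 2) < 1 := by
  rw [sqrt_lt' one_pos]; nlinarith [hρ.1]

lemma hasDerivAt_sqrt_one_sub_sq (hρ : ρ ∈ Ioo (0 : ℝ) 1) :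
    HasDerivAt (fun x => √(1 - x ^ 2)) (-ρ / √(1 - ρ ^ 2)) ρ := by
  have h := ((hasDerivAt_pow 2 ρ).const_sub 1).sqrt (one_sub_sq_pos_of_mem_Ioo hρ).ne'
  convert h using 1
  field_simp [(sqrt_one_sub_sq_pos hρ).ne']
  ring

end UnitInterval

def logPhi (k ρ : ℝ) : ℝ :=
  (k - 1 / 2) * log ρ - 1 / 2 * log (1 - ρ ^ 2) - k * log (1 + √(1 - ρ ^ 2))

/-- Written as an exponential so that its logarithmic derivative `phiLogDeriv k` is immediate;
see `phi_eq_rpow` for the closed form. -/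
def phi (k ρ : ℝ) : ℝ := exp (logPhi k ρ)

def phiLogDeriv (k ρ : ℝ) : ℝ := -1 / (2 * ρ) + ρ / (1 - ρ ^ 2) + k / (ρ * √(1 - ρ ^ 2))

lemma hasDerivAt_logPhi (k : ℝ) {ρ : ℝ} (hρ : ρ ∈ Ioo (0 : ℝ) 1) :
    HasDerivAt (logPhi k) (phiLogDeriv k ρ) ρ := by
  have h1 := ((hasDerivAt_pow 2 ρ).const_sub 1).log (one_sub_sq_pos_of_mem_Ioo hρ).ne'
  have h2 := ((hasDerivAt_sqrt_one_sub_sq hρ).const_add 1).log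
    (by linarith [sqrt_one_sub_sq_pos hρ])
  refine ((((hasDerivAt_log hρ.1.ne').const_mul (k - 1 / 2)).sub (h1.const_mul (1 / 2))).sub
    (h2.const_mul k)).congr_deriv ?_
  have hs := sqrt_one_sub_sq_pos hρ
  have hρ0 := hρ.1.ne'
  have hs2 := sq_sqrt_one_sub_sq hρ
  unfold phiLogDeriv
  generalize √(1 - ρ ^ 2) = s at *
  have h1 : 1 - ρ ^ 2 ≠ 0 := by rw [← hs2]; positivity
  field_simp
  linear_combination (2 * k - 2 * ρ ^ 2 * k) * hs2

lemma hasDerivAt_phiLogDeriv (k : ℝ) {ρ : ℝ} (hρ : ρ ∈ Ioo (0 : ℝ) 1) :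
    HasDerivAt (phiLogDeriv k) (1 / (2 * ρ ^ 2) + (1 + ρ ^ 2) / (1 - ρ ^ 2) ^ 2
      - k * (1 - 2 * ρ ^ 2) / (ρ ^ 2 * √(1 - ρ ^ 2) ^ 3)) ρ := by
  have hs := sqrt_one_sub_sq_pos hρ
  have h0 := hρ.1.ne'
  have h1 := one_sub_sq_pos_of_mem_Ioo hρ
  have ha : HasDerivAt (fun x : ℝ => -1 / (2 * x)) (1 / (2 * ρ ^ 2)) ρ := by
    refine ((hasDerivAt_const ρ (-1)).fun_div ((hasDerivAt_id' ρ).const_mul 2)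
      (by positivity)).congr_deriv ?_
    field_simp
    ring
  have hb : HasDerivAt (fun x : ℝ => x / (1 - x ^ 2)) ((1 + ρ ^ 2) / (1 - ρ ^ 2) ^ 2) ρ := by
    refine ((hasDerivAt_id' ρ).fun_div ((hasDerivAt_pow 2 ρ).const_sub 1) h1.ne').congr_deriv ?_
    field_simp
    ring
  have hc : HasDerivAt (fun x : ℝ => k / (x * √(1 - x ^ 2)))
      (- k * (1 - 2 * ρ ^ 2) / (ρ ^ 2 * √(1 - ρ ^ 2) ^ 3)) ρ := by
    refine ((hasDerivAt_const ρ k).fun_div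
      ((hasDerivAt_id' ρ).fun_mul (hasDerivAt_sqrt_one_sub_sq hρ)) (by positivity)).congr_deriv ?_
    have hs2 := sq_sqrt_one_sub_sq hρ
    generalize √(1 - ρ ^ 2) = s at *
    field_simp
    linear_combination (-k) * hs2
  exact ((ha.add hb).add hc).congr_deriv (by ring)

lemma hasDerivAt_phi (k : ℝ) {ρ : ℝ} (hρ : ρ ∈ Ioo (0 : ℝ) 1) :
    HasDerivAt (phi k) (phiLogDeriv k ρ * phi k ρ) ρ :=
  (hasDerivAt_logPhi k hρ).exp.congr_deriv (mul_comm _ _)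

lemma hasDerivAt_phiLogDeriv_mul_phi (k : ℝ) {ρ : ℝ} (hρ : ρ ∈ Ioo (0 : ℝ) 1) :
    HasDerivAt (fun x => phiLogDeriv k x * phi k x)
      ((deriv (phiLogDeriv k) ρ + phiLogDeriv k ρ ^ 2) * phi k ρ) ρ :=
  ((hasDerivAt_phiLogDeriv k hρ).differentiableAt.hasDerivAt.mul
    (hasDerivAt_phi k hρ)).congr_deriv (by ring)

lemma odeLhs_phiLogDeriv (l : ℕ) {k ρ : ℝ} (hk : k ^ 2 = ((3 : ℝ) / 2 + l) ^ 2)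
    (hρ : ρ ∈ Ioo (0 : ℝ) 1) :
    odeLhs l ρ 1 (phiLogDeriv k ρ) (deriv (phiLogDeriv k) ρ + phiLogDeriv k ρ ^ 2) = 0 := by
  have hs := sqrt_one_sub_sq_pos hρ
  have hs2 := sq_sqrt_one_sub_sq hρ
  have h0 := hρ.1.ne'
  have hl : ((l : ℝ) + 1) * ((l : ℝ) + 2) = k ^ 2 - 1 / 4 := by linear_combination -hk
  rw [(hasDerivAt_phiLogDeriv k hρ).deriv]
  unfold odeLhs phiLogDeriv
  rw [hl]
  generalize √(1 - ρ ^ 2) = s at *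
  rw [← hs2]
  field_simp
  linear_combination (48 * ρ ^ 2 + 16 * s * k - 12 * s ^ 2) * hs2

lemma odeLhs_phi (l : ℕ) {k ρ : ℝ} (hk : k ^ 2 = ((3 : ℝ) / 2 + l) ^ 2)
    (hρ : ρ ∈ Ioo (0 : ℝ) 1) :
    odeLhs l ρ (phi k ρ) (phiLogDeriv k ρ * phi k ρ)
      ((deriv (phiLogDeriv k) ρ + phiLogDeriv k ρ ^ 2) * phi k ρ) = 0 := by
  rw [odeLhs_mul_of_logDeriv, odeLhs_phiLogDeriv l hk hρ, zero_mul]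

lemma odeLhs_deriv_eq_zero_of_eqOn_linComb_phi (l : ℕ) (a b : ℝ) {u : ℝ → ℝ}
    (hu : EqOn u (fun x => a * phi ((3 : ℝ) / 2 + l) x + b * phi (-((3 : ℝ) / 2 + l)) x)
      (Ioo 0 1))
    {ρ : ℝ} (hρ : ρ ∈ Ioo (0 : ℝ) 1) :
    odeLhs l ρ (u ρ) (deriv u ρ) (deriv (deriv u) ρ) = 0 := by
  set c : ℝ := 3 / 2 + l
  refine odeLhs_deriv_eq_zero_of_eqOn isOpen_Ioo hu
    (fun x hx => ((hasDerivAt_phi c hx).const_mul a).add ((hasDerivAt_phi (-c) hx).const_mul b))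
    (fun x hx => ((hasDerivAt_phiLogDeriv_mul_phi c hx).const_mul a).add
      ((hasDerivAt_phiLogDeriv_mul_phi (-c) hx).const_mul b)) (fun x hx => ?_) hρ
  rw [odeLhs_linComb, odeLhs_phi l rfl hx, odeLhs_phi l (neg_sq c) hx]
  ring

lemma exp_eq_rpow_mul_inv_sqrt_mul_rpow (k : ℝ) {ρ t : ℝ} (hρ : ρ ∈ Ioo (0 : ℝ) 1)
    (ht : 0 < t) :
    exp ((k - 1 / 2) * log ρ - 1 / 2 * log (1 - ρ ^ 2) - k * log t) =
      ρ ^ (k - 1 / 2) * (√(1 - ρ ^ 2))⁻¹ * t ^ (-k) := by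
  have h1 := one_sub_sq_pos_of_mem_Ioo hρ
  rw [rpow_def_of_pos hρ.1, rpow_def_of_pos ht, sqrt_eq_rpow, ← rpow_neg h1.le,
    rpow_def_of_pos h1, ← exp_add, ← exp_add]
  ring_nf

lemma phi_eq_rpow (k : ℝ) {ρ : ℝ} (hρ : ρ ∈ Ioo (0 : ℝ) 1) :
    phi k ρ = ρ ^ (k - 1 / 2) * (√(1 - ρ ^ 2))⁻¹ * (1 + √(1 - ρ ^ 2)) ^ (-k) :=
  exp_eq_rpow_mul_inv_sqrt_mul_rpow k hρ (by linarith [sqrt_one_sub_sq_pos hρ])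

lemma phi_neg_eq_rpow (k : ℝ) {ρ : ℝ} (hρ : ρ ∈ Ioo (0 : ℝ) 1) :
    phi (-k) ρ = ρ ^ (k - 1 / 2) * (√(1 - ρ ^ 2))⁻¹ * (1 - √(1 - ρ ^ 2)) ^ (-k) := by
  have hs := sqrt_one_sub_sq_pos hρ
  have hs1 := sqrt_one_sub_sq_lt_one hρ
  have hlog : log (1 - √(1 - ρ ^ 2)) + log (1 + √(1 - ρ ^ 2)) = 2 * log ρ := by
    have hprod : (1 - √(1 - ρ ^ 2)) * (1 + √(1 - ρ ^ 2)) = ρ ^ 2 := by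
      linear_combination -(sq_sqrt_one_sub_sq hρ)
    rw [← log_mul (by linarith) (by linarith), hprod, log_pow, Nat.cast_two]
  rw [← exp_eq_rpow_mul_inv_sqrt_mul_rpow k hρ (by linarith), phi, logPhi]
  congr 1
  linear_combination k * hlog

lemma psi0_eq_phi (l : ℕ) {ρ : ℝ} (hρ : ρ ∈ Ioo (0 : ℝ) 1) :
    psi0 l ρ = 2 ^ ((3 : ℝ) / 2 + l) * phi ((3 : ℝ) / 2 + l) ρ := by
  have hpow : ρ ^ ((3 : ℝ) / 2 + l - 1 / 2) = ρ ^ (l + 1) := by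
    rw [← rpow_natCast]; push_cast; ring_nf
  rw [phi_eq_rpow _ hρ, psi0, hpow, div_rpow two_pos.le (by positivity),
    rpow_neg (one_sub_sq_pos_of_mem_Ioo hρ).le, ← sqrt_eq_rpow,
    rpow_neg (by positivity : 0 ≤ 1 + √(1 - ρ ^ 2))]
  ring

lemma psi1_eq_phi (l : ℕ) {ρ : ℝ} (hρ : ρ ∈ Ioo (0 : ℝ) 1) :
    psi1 l ρ =
      (3 + 2 * (l : ℝ))⁻¹ * (phi (-((3 : ℝ) / 2 + l)) ρ - phi ((3 : ℝ) / 2 + l) ρ) := by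
  have hs := sqrt_one_sub_sq_pos hρ
  have hs1 := sqrt_one_sub_sq_lt_one hρ
  have hpow : ρ ^ ((3 : ℝ) / 2 + l - 1 / 2) = ρ ^ (l + 1) := by
    rw [← rpow_natCast]; push_cast; ring_nf
  rw [phi_neg_eq_rpow _ hρ, phi_eq_rpow _ hρ, psi1, hpow, one_div (1 - _), one_div (1 + _),
    inv_rpow (by linarith), inv_rpow (by positivity), ← rpow_neg (by linarith),
    ← rpow_neg (by positivity)]
  field_simp

lemma phi_eq_phi_neg_mul_exp (k ρ : ℝ) :
    phi k ρ = phi (-k) ρ * exp (2 * k * (log ρ - log (1 + √(1 - ρ ^ 2)))) := by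
  rw [phi, phi, ← exp_add, logPhi, logPhi]
  ring_nf

lemma phi_linearIndependent {k : ℝ} (hk : k ≠ 0) {a b : ℝ}
    (h : ∀ ρ ∈ Ioo (0 : ℝ) 1, a * phi k ρ + b * phi (-k) ρ = 0) : a = 0 ∧ b = 0 := by
  have hratio : ∀ ρ ∈ Ioo (0 : ℝ) 1,
      a * exp (2 * k * log (ρ / (1 + √(1 - ρ ^ 2)))) + b = 0 := fun ρ hρ => by
    have hprod : (a * exp (2 * k * log (ρ / (1 + √(1 - ρ ^ 2)))) + b) * phi (-k) ρ = 0 := by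
      rw [log_div hρ.1.ne' (by linarith [sqrt_one_sub_sq_pos hρ])]
      linear_combination h ρ hρ - a * phi_eq_phi_neg_mul_exp k ρ
    exact (mul_eq_zero.1 hprod).resolve_right (exp_pos _).ne'
  -- `3/5` and `4/5` are chosen so that `√(1 - ρ²)` is rational.
  have s35 : (3 / 5 : ℝ) / (1 + √(1 - (3 / 5) ^ 2)) = 1 / 3 := by
    rw [show √(1 - (3 / 5 : ℝ) ^ 2) = 4 / 5 by rw [sqrt_eq_iff_mul_self_eq] <;> norm_num]
    norm_num
  have s45 : (4 / 5 : ℝ) / (1 + √(1 - (4 / 5) ^ 2)) = 1 / 2 := by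
    rw [show √(1 - (4 / 5 : ℝ) ^ 2) = 3 / 5 by rw [sqrt_eq_iff_mul_self_eq] <;> norm_num]
    norm_num
  have e1 := hratio (3 / 5) ⟨by norm_num, by norm_num⟩
  have e2 := hratio (4 / 5) ⟨by norm_num, by norm_num⟩
  rw [s35] at e1
  rw [s45] at e2
  have hne : exp (2 * k * log (1 / 3)) - exp (2 * k * log (1 / 2)) ≠ 0 := by
    rw [sub_ne_zero, Ne, exp_eq_exp, mul_right_inj' (by positivity)]
    exact (log_lt_log (by norm_num) (by norm_num)).ne
  have ha : a = 0 := (mul_eq_zero.1 (by linear_combination e1 - e2)).resolve_right hne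
  exact ⟨ha, by simpa [ha] using e1⟩

/-- `ψ_{0,l}` and `ψ_{1,l}` both solve
`−(1−ρ²)u'' + (−2/ρ + 5ρ)u' + (15/4 + (l+1)(l+2)/ρ²)u = 0` on `(0,1)`, and they are
linearly independent. -/
theorem stmt_10 (l : ℕ) :
    (∀ ρ ∈ Set.Ioo (0 : ℝ) 1,
        -(1 - ρ ^ 2) * deriv (deriv (psi0 l)) ρ + (-2 / ρ + 5 * ρ) * deriv (psi0 l) ρ +
          (15 / 4 + ((l : ℝ) + 1) * ((l : ℝ) + 2) / ρ ^ 2) * psi0 l ρ = 0) ∧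
    (∀ ρ ∈ Set.Ioo (0 : ℝ) 1,
        -(1 - ρ ^ 2) * deriv (deriv (psi1 l)) ρ + (-2 / ρ + 5 * ρ) * deriv (psi1 l) ρ +
          (15 / 4 + ((l : ℝ) + 1) * ((l : ℝ) + 2) / ρ ^ 2) * psi1 l ρ = 0) ∧
    (∀ a b : ℝ, (∀ ρ ∈ Set.Ioo (0 : ℝ) 1, a * psi0 l ρ + b * psi1 l ρ = 0) →
        a = 0 ∧ b = 0) := by
  set d : ℝ := (3 + 2 * (l : ℝ))⁻¹
  have hd : d ≠ 0 := inv_ne_zero (by positivity)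
  refine ⟨fun ρ hρ => odeLhs_deriv_eq_zero_of_eqOn_linComb_phi l (2 ^ ((3 : ℝ) / 2 + l)) 0
      (fun x hx => ?_) hρ,
    fun ρ hρ => odeLhs_deriv_eq_zero_of_eqOn_linComb_phi l (-d) d (fun x hx => ?_) hρ,
    fun a b h => ?_⟩
  · simp only [psi0_eq_phi l hx, zero_mul, add_zero]
  · simp only [psi1_eq_phi l hx]; ring
  · obtain ⟨hab, hbd⟩ := phi_linearIndependent (k := (3 : ℝ) / 2 + l) (by positivity)
      (a := a * 2 ^ ((3 : ℝ) / 2 + l) - b * d) (b := b * d)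
      (fun ρ hρ => by rw [← h ρ hρ, psi0_eq_phi l hρ, psi1_eq_phi l hρ]; ring)
    have hb : b = 0 := (mul_eq_zero.1 hbd).resolve_right hd
    refine ⟨?_, hb⟩
    simpa [hb, (rpow_pos_of_pos two_pos _).ne'] using hab

end
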